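/- arXiv:chao-dyn/9801016 — 2 statements merged into one kernel-verified Lean document; each statement's English description precedes it below -/
import Mathlib

section
/- If the forcing vanishes, i.e. μ'(t)(M) = −μ(t)(ξ(t)·M − M·ξ(t)) for all t and all matrices M, then for every fixed matrix η ∈ Matrix (n×n, ℝ) the function t ↦ μ(t)(g(t) · η · g(t)⁻¹) is constant (Noether conservation of the Kelvin quantity). -/
attribute [local instance] Matrix.normedAddCommGroup Matrix.normedSpace

/-! The conjugate `K = g η g⁻¹` moves by `K' = ξK − Kξ`, since `(g⁻¹)' = −g⁻¹ξ`. Hence by the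
product rule `(μ(K))' = μ(ξK − Kξ) + μ'(K)`, and the Euler–Poincaré equation says exactly that
this vanishes. -/

section NormedAlgebra

variable {𝕜 𝔸 : Type*} [NontriviallyNormedField 𝕜] [NormedRing 𝔸] [NormedAlgebra 𝕜 𝔸]
  [HasSummableGeomSeries 𝔸] {g : 𝕜 → 𝔸} {g' : 𝔸} {t : 𝕜}

theorem HasDerivAt.ringInverse (hg : HasDerivAt g g' t) (ht : IsUnit (g t)) :
    HasDerivAt (fun τ => Ring.inverse (g τ))
      (-(Ring.inverse (g t) * g' * Ring.inverse (g t))) t := by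
  obtain ⟨u, hu⟩ := ht
  have := (hu ▸ hasFDerivAt_ringInverse (𝕜 := 𝕜) u).comp_hasDerivAt t hg
  simpa [← hu, Ring.inverse_unit, Function.comp_def] using this

theorem HasDerivAt.mul_mul_ringInverse {ξ : 𝔸} (hg : HasDerivAt g (ξ * g t) t)
    (ht : IsUnit (g t)) (η : 𝔸) :
    HasDerivAt (fun τ => g τ * η * Ring.inverse (g τ))
      (ξ * (g t * η * Ring.inverse (g t)) - g t * η * Ring.inverse (g t) * ξ) t := by
  convert (hg.mul_const η).fun_mul (hg.ringInverse ht) using 1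
  have hinv : Ring.inverse (g t) * (ξ * g t) * Ring.inverse (g t) = Ring.inverse (g t) * ξ := by
    rw [mul_assoc, mul_assoc, Ring.mul_inverse_cancel _ ht, mul_one]
  rw [hinv]
  noncomm_ring

end NormedAlgebra

/-- `HasDerivAt` only sees the topology, so the operator norm may be borrowed to make matrices a
normed algebra. -/
theorem Matrix.hasDerivAt_mul_mul_inv {𝕜 m : Type*} [NontriviallyNormedField 𝕜] [CompleteSpace 𝕜]
    [Fintype m] [DecidableEq m] {g ξ : 𝕜 → Matrix m m 𝕜} {t : 𝕜}
    (hg : HasDerivAt g (ξ t * g t) t) (ht : IsUnit (g t)) (η : Matrix m m 𝕜) :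
    HasDerivAt (fun τ => g τ * η * (g τ)⁻¹)
      (ξ t * (g t * η * (g t)⁻¹) - g t * η * (g t)⁻¹ * ξ t) t := by
  let : NormedRing (Matrix m m 𝕜) := Matrix.linftyOpNormedRing
  let : NormedAlgebra 𝕜 (Matrix m m 𝕜) := Matrix.linftyOpNormedAlgebra
  have : HasSummableGeomSeries (Matrix m m 𝕜) :=
    @instHasSummableGeomSeriesOfCompleteSpace _ _ (by exact Matrix.instCompleteSpace m m 𝕜)
  simp only [Matrix.nonsing_inv_eq_ringInverse]
  exact hg.mul_mul_ringInverse ht η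

/-- On a finite-dimensional space, differentiability of each `τ ↦ L τ v` suffices: expand `K τ`
in a basis. -/
theorem HasDerivAt.linearMap_apply {𝕜 E F : Type*} [NontriviallyNormedField 𝕜] [CompleteSpace 𝕜]
    [NormedAddCommGroup E] [NormedSpace 𝕜 E] [FiniteDimensional 𝕜 E]
    [NormedAddCommGroup F] [NormedSpace 𝕜 F] {L : 𝕜 → E →ₗ[𝕜] F} {L' : E →ₗ[𝕜] F}
    {K : 𝕜 → E} {K' : E} {t : 𝕜} (hL : ∀ v, HasDerivAt (fun τ => L τ v) (L' v) t)
    (hK : HasDerivAt K K' t) :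
    HasDerivAt (fun τ => L τ (K τ)) (L t K' + L' (K t)) t := by
  let b := Module.finBasis 𝕜 E
  have hcoord (i) : HasDerivAt (fun τ => b.repr (K τ) i) (b.repr K' i) t :=
    (LinearMap.toContinuousLinearMap (b.coord i)).hasFDerivAt.comp_hasDerivAt t hK
  have hexpand (L₀ : E →ₗ[𝕜] F) (v : E) : L₀ v = ∑ i, b.repr v i • L₀ (b i) := by
    conv_lhs => rw [← b.sum_repr v]
    simp only [map_sum, map_smul]
  have hsum : HasDerivAt (fun τ => ∑ i, b.repr (K τ) i • L τ (b i))
      (∑ i, (b.repr (K t) i • L' (b i) + b.repr K' i • L t (b i))) t :=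
    HasDerivAt.fun_sum fun i _ => (hcoord i).fun_smul (hL (b i))
  convert hsum using 1
  · exact funext fun τ => hexpand (L τ) (K τ)
  · rw [Finset.sum_add_distrib, ← hexpand, ← hexpand, add_comm]

theorem stmt6_general {n : ℕ}
    (g ξ : ℝ → Matrix (Fin n) (Fin n) ℝ)
    (hginv : ∀ t, IsUnit (g t))
    (hg : ∀ t, HasDerivAt g (ξ t * g t) t)
    (μ dμ : ℝ → Matrix (Fin n) (Fin n) ℝ →ₗ[ℝ] ℝ)
    (hμ : ∀ (t : ℝ) (M : Matrix (Fin n) (Fin n) ℝ), HasDerivAt (fun τ => μ τ M) (dμ t M) t)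
    (hEP : ∀ (t : ℝ) (M : Matrix (Fin n) (Fin n) ℝ),
      dμ t M = -μ t (ξ t * M - M * ξ t)) :
    ∀ (η : Matrix (Fin n) (Fin n) ℝ) (t t' : ℝ),
      μ t (g t * η * (g t)⁻¹) = μ t' (g t' * η * (g t')⁻¹) := by
  intro η t t'
  have hconserved (τ : ℝ) : HasDerivAt (fun τ => μ τ (g τ * η * (g τ)⁻¹)) 0 τ := by
    have := (Matrix.hasDerivAt_mul_mul_inv (hg τ) (hginv τ) η).linearMap_apply (hμ τ)
    rwa [hEP, add_neg_cancel] at this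
  exact is_const_of_deriv_eq_zero (fun τ => (hconserved τ).differentiableAt)
    (fun τ => (hconserved τ).deriv) t t'

/-- Noether conservation of the Kelvin quantity: if `g' = ξ·g` with
`g(t)` invertible and `μ(t)` is a differentiable curve of linear functionals on
matrices satisfying the unforced Euler–Poincaré equation `μ'(M) = −μ(ξM − Mξ)`,
then for every fixed matrix `η` the function `t ↦ μ(t)(g(t) η g(t)⁻¹)` is constant. -/
theorem stmt6 {n : ℕ}
    (g ξ : ℝ → Matrix (Fin n) (Fin n) ℝ)
    (hξcont : Continuous ξ)
    (hginv : ∀ t, IsUnit (g t))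
    (hg : ∀ t, HasDerivAt g (ξ t * g t) t)
    (μ dμ : ℝ → Matrix (Fin n) (Fin n) ℝ →ₗ[ℝ] ℝ)
    (hμ : ∀ (t : ℝ) (M : Matrix (Fin n) (Fin n) ℝ), HasDerivAt (fun τ => μ τ M) (dμ t M) t)
    (hEP : ∀ (t : ℝ) (M : Matrix (Fin n) (Fin n) ℝ),
      dμ t M = -μ t (ξ t * M - M * ξ t)) :
    ∀ (η : Matrix (Fin n) (Fin n) ℝ) (t t' : ℝ),
      μ t (g t * η * (g t)⁻¹) = μ t' (g t' * η * (g t')⁻¹) :=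
  stmt6_general g ξ hginv hg μ dμ hμ hEP
end

section
/- Suppose additionally that for each t the map φ(t, ·) : ℝⁿ → ℝⁿ is a bijection. Then for every measurable set Ω ⊆ ℝⁿ and every integrable function f₀ : ℝⁿ → ℝ, the phase-space probability integral over the evolving region is constant in time: ∫_{φ(t,·)(Ω)} f₀(φ(t,·)⁻¹(z)) dz = ∫_Ω f₀(z) dz for all t. -/
/-!
Liouville's theorem. For fixed `z`, the spatial Jacobian `J t = D_z φ(t, z)` solves the
variational equation `J' = D_y u(t, φ(t, z)) ∘ J`, because the mixed partial derivatives of the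
`C²` map `φ` commute. By Jacobi's formula `(det J)' = tr (D_y u) · det J = div u · det J = 0`, and
`J 0 = id`, so `det J ≡ 1`. The change of variables formula for the injective map `φ(t, ·)`, whose
Jacobian determinant is therefore `1`, gives the identity once `invFun` is cancelled against
`φ(t, ·)` on `Ω`.
-/

open MeasureTheory

namespace Matrix

variable {𝕜 : Type*} {ι : Type*} [Fintype ι] [DecidableEq ι]

theorem hasDerivAt_det [NontriviallyNormedField 𝕜] {M : 𝕜 → Matrix ι ι 𝕜}
    {M' : Matrix ι ι 𝕜} {t : 𝕜} (h : ∀ i j, HasDerivAt (fun s => M s i j) (M' i j) t) :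
    HasDerivAt (fun s => (M s).det) (∑ j, ((M t).updateRow j (M' j)).det) t := by
  simp only [det_apply']
  refine (HasDerivAt.fun_sum fun σ _ =>
    (HasDerivAt.fun_finsetProd fun i _ => h (σ i) i).const_mul
      ((Equiv.Perm.sign σ : ℤ) : 𝕜)).congr_deriv ?_
  rw [Finset.sum_comm]
  refine Finset.sum_congr rfl fun σ _ => ?_
  rw [Finset.mul_sum, ← Equiv.sum_comp σ fun j =>
    ((Equiv.Perm.sign σ : ℤ) : 𝕜) * ∏ i, (M t).updateRow j (M' j) (σ i) i]
  refine Finset.sum_congr rfl fun k _ => ?_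
  rw [← Finset.mul_prod_erase _ _ (Finset.mem_univ k), updateRow_self, smul_eq_mul,
    mul_comm (M' (σ k) k)]
  congr 2
  refine Finset.prod_congr rfl fun i hi => ?_
  exact (congrFun (updateRow_ne (σ.injective.ne (Finset.ne_of_mem_erase hi))) i).symm

theorem sum_det_updateRow_mul [CommRing 𝕜] (A M : Matrix ι ι 𝕜) :
    ∑ j, (M.updateRow j ((A * M) j)).det = A.trace * M.det := by
  have hrow : ∀ j, (A * M) j = ∑ k, A j k • M k := fun j => by
    ext c; simp [mul_apply, Finset.sum_apply]
  simp only [hrow, det_updateRow_sum, smul_eq_mul, ← Finset.sum_mul, trace, diag]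

theorem det_eq_of_hasDerivAt_mul_of_trace_eq_zero [RCLike 𝕜] {M A : 𝕜 → Matrix ι ι 𝕜}
    (hM : ∀ s i j, HasDerivAt (fun r => M r i j) ((A s * M s) i j) s)
    (hA : ∀ s, (A s).trace = 0) (s t : 𝕜) : (M s).det = (M t).det := by
  have hdet : ∀ r, HasDerivAt (fun r => (M r).det) 0 r := fun r => by
    simpa [sum_det_updateRow_mul, hA r] using hasDerivAt_det (hM r)
  exact is_const_of_deriv_eq_zero (fun r => (hdet r).differentiableAt) (fun r => (hdet r).deriv) s t

end Matrix

theorem ContinuousLinearMap.det_eq_of_hasDerivAt_comp_of_trace_eq_zero {𝕜 E : Type*} [RCLike 𝕜]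
    [NormedAddCommGroup E] [NormedSpace 𝕜 E] [FiniteDimensional 𝕜 E] {D A : 𝕜 → E →L[𝕜] E}
    (hD : ∀ s, HasDerivAt D ((A s).comp (D s)) s) (hA : ∀ s, LinearMap.trace 𝕜 E (A s) = 0)
    (s t : 𝕜) : (D s).det = (D t).det := by
  let b := Module.finBasis 𝕜 E
  have hentry : ∀ s i j, HasDerivAt (fun r => LinearMap.toMatrix b b (D r) i j)
      ((LinearMap.toMatrix b b (A s) * LinearMap.toMatrix b b (D s)) i j) s := fun s i j => by
    rw [← LinearMap.toMatrix_comp]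
    simp only [LinearMap.toMatrix_apply]
    exact ((LinearMap.toContinuousLinearMap (b.coord i)).comp
      (ContinuousLinearMap.apply 𝕜 E (b j))).hasFDerivAt.comp_hasDerivAt s (hD s)
  have := Matrix.det_eq_of_hasDerivAt_mul_of_trace_eq_zero hentry
    (fun s => by rw [← LinearMap.trace_eq_matrix_trace, hA]) s t
  simpa only [LinearMap.det_toMatrix] using this

theorem trace_fderiv_eq_sum {𝕜 ι : Type*} [NontriviallyNormedField 𝕜] [Fintype ι] [DecidableEq ι]
    {g : (ι → 𝕜) → ι → 𝕜} {y : ι → 𝕜} (hg : DifferentiableAt 𝕜 g y) :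
    LinearMap.trace 𝕜 _ (fderiv 𝕜 g y : (ι → 𝕜) →ₗ[𝕜] ι → 𝕜) =
      ∑ i, fderiv 𝕜 (fun y' => g y' i) y (Pi.single i 1) := by
  rw [LinearMap.trace_eq_matrix_trace 𝕜 (Pi.basisFun 𝕜 ι), Matrix.trace]
  simp [fderiv_apply hg]

open ContinuousLinearMap in
theorem ContDiff.hasDerivAt_fderiv_snd {E F : Type*} [NormedAddCommGroup E] [NormedSpace ℝ E]
    [NormedAddCommGroup F] [NormedSpace ℝ F] {f : ℝ × E → F} (hf : ContDiff ℝ 2 f)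
    (s : ℝ) (z : E) :
    HasDerivAt (fun τ => fderiv ℝ (fun w => f (τ, w)) z)
      (fderiv ℝ (fun w => deriv (fun τ => f (τ, w)) s) z) s := by
  have hd : Differentiable ℝ f := hf.differentiable (by norm_num)
  have hd2 : Differentiable ℝ (fderiv ℝ f) := (hf.fderiv_right le_rfl).differentiable one_ne_zero
  have hsnd : ∀ τ w, fderiv ℝ (fun w => f (τ, w)) w = (fderiv ℝ f (τ, w)).comp (inr ℝ ℝ E) :=
    fun τ w => ((hd _).hasFDerivAt.comp w (hasFDerivAt_prodMk_right τ w)).fderiv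
  have hfst : ∀ τ w, deriv (fun τ => f (τ, w)) τ = fderiv ℝ f (τ, w) (1, 0) := fun τ w =>
    ((hd _).hasFDerivAt.comp_hasDerivAt τ ((hasDerivAt_id τ).prodMk (hasDerivAt_const τ w))).deriv
  have hsymm : IsSymmSndFDerivAt ℝ f (s, z) := hf.contDiffAt.isSymmSndFDerivAt (by simp)
  have htime : HasDerivAt (fun τ => fderiv ℝ f (τ, z)) (fderiv ℝ (fderiv ℝ f) (s, z) (1, 0)) s :=
    (hd2 _).hasFDerivAt.comp_hasDerivAt s ((hasDerivAt_id s).prodMk (hasDerivAt_const s z))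
  have hspace : HasFDerivAt (fun w => fderiv ℝ f (s, w) (1, 0))
      ((apply ℝ F ((1 : ℝ), (0 : E))).comp ((fderiv ℝ (fderiv ℝ f) (s, z)).comp (inr ℝ ℝ E))) z :=
    (apply ℝ F ((1 : ℝ), (0 : E))).hasFDerivAt.comp z
      ((hd2 _).hasFDerivAt.comp z (hasFDerivAt_prodMk_right s z))
  simp only [hsnd, hfst, hspace.fderiv]
  refine (((compL ℝ E (ℝ × E) F).flip (inr ℝ ℝ E)).hasFDerivAt.comp_hasDerivAt s
    htime).congr_deriv ?_
  ext v
  exact hsymm _ _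

section Flow

variable {E : Type*} [NormedAddCommGroup E] [NormedSpace ℝ E] {u φ : ℝ × E → E}

theorem hasDerivAt_fderiv_flow (hu : Differentiable ℝ u) (hφ : ContDiff ℝ 2 φ)
    (hflow : ∀ t z, deriv (fun τ => φ (τ, z)) t = u (t, φ (t, z))) (s : ℝ) (z : E) :
    HasDerivAt (fun τ => fderiv ℝ (fun w => φ (τ, w)) z)
      ((fderiv ℝ (fun y => u (s, y)) (φ (s, z))).comp (fderiv ℝ (fun w => φ (s, w)) z)) s := by
  have h := hφ.hasDerivAt_fderiv_snd s z
  simp only [hflow] at h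
  have hφd : Differentiable ℝ φ := hφ.differentiable (by norm_num)
  rwa [fderiv_fun_comp (g := fun y => u (s, y)) (f := fun w => φ (s, w)) z (by fun_prop)
    (by fun_prop)] at h

theorem det_fderiv_flow_eq_one [FiniteDimensional ℝ E] (hu : Differentiable ℝ u)
    (hdiv : ∀ t y, LinearMap.trace ℝ E (fderiv ℝ (fun y => u (t, y)) y) = 0)
    (hφ : ContDiff ℝ 2 φ) (hflow : ∀ t z, deriv (fun τ => φ (τ, z)) t = u (t, φ (t, z)))
    (hinit : ∀ z, φ (0, z) = z) (t : ℝ) (z : E) :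
    (fderiv ℝ (fun w => φ (t, w)) z).det = 1 := by
  rw [ContinuousLinearMap.det_eq_of_hasDerivAt_comp_of_trace_eq_zero
    (hasDerivAt_fderiv_flow hu hφ hflow · z) (fun s => hdiv s _) t 0]
  simp [hinit, ContinuousLinearMap.det, LinearMap.det_id]

end Flow

/-- the flow of a divergence-free C¹ vector field preserves the
phase-space probability integral: for any measurable region `Ω`, integrable `f₀`
and time `t`, `∫_{φ(t,·)(Ω)} f₀(φ(t,·)⁻¹(z)) dz = ∫_Ω f₀(z) dz`. -/
theorem stmt13 {n : ℕ}
    (u : ℝ × (Fin n → ℝ) → Fin n → ℝ) (hu : ContDiff ℝ 1 u)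
    (hdiv : ∀ (t : ℝ) (y : Fin n → ℝ),
      ∑ i : Fin n, fderiv ℝ (fun y' => u (t, y') i) y (Pi.single i 1) = 0)
    (φ : ℝ × (Fin n → ℝ) → Fin n → ℝ) (hφ : ContDiff ℝ 2 φ)
    (hflow : ∀ t z, deriv (fun τ => φ (τ, z)) t = u (t, φ (t, z)))
    (hinit : ∀ z, φ (0, z) = z)
    (hbij : ∀ t : ℝ, Function.Bijective fun z => φ (t, z)) :
    ∀ Ω : Set (Fin n → ℝ), MeasurableSet Ω →
      ∀ f₀ : (Fin n → ℝ) → ℝ, Integrable f₀ →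
        ∀ t : ℝ,
          (∫ z in (fun z => φ (t, z)) '' Ω, f₀ (Function.invFun (fun z => φ (t, z)) z))
            = ∫ z in Ω, f₀ z := by
  intro Ω hΩ f₀ _ t
  have hud : Differentiable ℝ u := hu.differentiable one_ne_zero
  have hφd : Differentiable ℝ φ := hφ.differentiable (by norm_num)
  have hφt : Differentiable ℝ fun w => φ (t, w) := by fun_prop
  have hdet : ∀ z, (fderiv ℝ (fun w => φ (t, w)) z).det = 1 :=
    det_fderiv_flow_eq_one hud (fun s y => by rw [trace_fderiv_eq_sum (by fun_prop), hdiv])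
      hφ hflow hinit t
  rw [integral_image_eq_integral_abs_det_fderiv_smul volume hΩ
    (fun z _ => (hφt z).hasFDerivAt.hasFDerivWithinAt)
    (hbij t).injective.injOn]
  simp only [hdet, abs_one, one_smul, Function.leftInverse_invFun (hbij t).injective _]
end
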